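/- The generating function G(x,z,u,v) of refined shapes, defined by the system G = G^{RC}·(1+z) + (1+z), G^{RC} = G·G^C, G^C = G^▽ + G^△ + G^□ with G^▽ = G^△ = xzu + x·G^{DT}, G^□ = x²zv + x²·G^{DT}, and G^{DT} = G − (1+z) − G^C, satisfies the quadratic equation x(x+2)(z+1)·G² − (x(x+2)(z+1)² + (x+1)² − (2xu + x²v)z(z+1))·G + (x+1)²(z+1) = 0. -/

import Mathlib

/-!
Eliminating `G^{DT}` from the equations of the tight shapes gives
`(x+1)² G^C = (2xu + x²v) z + x(x+2)(G − (1+z))`, which is linear in `G`. Multiplying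
`G = (1+z)(1 + G·G^C)` by `(x+1)²` and substituting yields the quadratic; only ring
identities are involved, so the argument works in any commutative ring.
-/

open MvPowerSeries

noncomputable section

def xV : MvPowerSeries (Fin 4) ℚ := MvPowerSeries.X 0
def zV : MvPowerSeries (Fin 4) ℚ := MvPowerSeries.X 1
def uV : MvPowerSeries (Fin 4) ℚ := MvPowerSeries.X 2
def vV : MvPowerSeries (Fin 4) ℚ := MvPowerSeries.X 3

section ShapeGrammar

variable {R : Type*} [CommRing R] (x z u v : R)

theorem closed_mul_sq_add_one_eq {G GC Gdown Gup Gsq GDT : R}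
    (h3 : GC = Gdown + Gup + Gsq)
    (h4 : Gdown = x * z * u + x * GDT)
    (h5 : Gup = x * z * u + x * GDT)
    (h6 : Gsq = x ^ 2 * z * v + x ^ 2 * GDT)
    (h7 : GDT = G - (1 + z) - GC) :
    (x + 1) ^ 2 * GC = (2 * x * u + x ^ 2 * v) * z + x * (x + 2) * (G - (1 + z)) := by
  linear_combination h3 + h4 + h5 + h6 + x * (x + 2) * h7

theorem quadratic_of_closed_mul_sq_add_one_eq {G GC : R}
    (hG : G = G * GC * (1 + z) + (1 + z))
    (hC : (x + 1) ^ 2 * GC = (2 * x * u + x ^ 2 * v) * z + x * (x + 2) * (G - (1 + z))) :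
    x * (x + 2) * (z + 1) * G ^ 2
      - (x * (x + 2) * (z + 1) ^ 2 + (x + 1) ^ 2
          - (2 * x * u + x ^ 2 * v) * (z * (z + 1))) * G
      + (x + 1) ^ 2 * (z + 1) = 0 := by
  linear_combination (-(x + 1) ^ 2) * hG - (G * (z + 1)) * hC

end ShapeGrammar

/-- If `G, G^{RC}, G^{C}, G^{▽}, G^{△}, G^{□}, G^{DT}` satisfy the shape
grammar system, then `G` satisfies the quadratic equation
`x(x+2)(z+1)G² − (x(x+2)(z+1)² + (x+1)² − (2xu + x²v)z(z+1))G + (x+1)²(z+1) = 0`. -/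
theorem shape_grammar_implies_quadratic
    (G GRC GC Gdown Gup Gsq GDT : MvPowerSeries (Fin 4) ℚ)
    (h1 : G = GRC * (1 + zV) + (1 + zV))
    (h2 : GRC = G * GC)
    (h3 : GC = Gdown + Gup + Gsq)
    (h4 : Gdown = xV * zV * uV + xV * GDT)
    (h5 : Gup = xV * zV * uV + xV * GDT)
    (h6 : Gsq = xV ^ 2 * zV * vV + xV ^ 2 * GDT)
    (h7 : GDT = G - (1 + zV) - GC) :
    xV * (xV + 2) * (zV + 1) * G ^ 2
      - (xV * (xV + 2) * (zV + 1) ^ 2 + (xV + 1) ^ 2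
          - (2 * xV * uV + xV ^ 2 * vV) * (zV * (zV + 1))) * G
      + (xV + 1) ^ 2 * (zV + 1) = 0 :=
  quadratic_of_closed_mul_sq_add_one_eq xV zV uV vV (h2 ▸ h1)
    (closed_mul_sq_add_one_eq xV zV uV vV h3 h4 h5 h6 h7)

end
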